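/- Let ρ ≥ 2 and d ≥ 1 be integers with ρd ≥ 3, set N = ρd/2 and m = d/2 (as real numbers), let ε ∈ {0,1}, and let s ≥ ε be an integer. Then the sum over k from 0 to s−ε of ((N+2k+ε−1)/(N+k+ε−1)) · ((N)_{k+ε}/(m)_{k+ε}) · ((N−m)_k/k!) equals (N)_s·(N−m+1)_{s−ε}/((m)_s·(s−ε)!). -/
import Mathlib


/-- The ascending Pochhammer symbol `(x)_n = x (x+1) ⋯ (x+n-1)` for a real `x`. -/
noncomputable def poch (x : ℝ) (n : ℕ) : ℝ := (ascPochhammer ℝ n).eval x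

lemma poch_zero (x : ℝ) : poch x 0 = 1 := by simp [poch]

lemma poch_succ (x : ℝ) (n : ℕ) : poch x (n + 1) = poch x n * (x + n) := by
  simp [poch, ascPochhammer_succ_eval]

lemma poch_succ_left (x : ℝ) (n : ℕ) : poch x (n + 1) = x * poch (x + 1) n := by
  simp [poch, ascPochhammer_succ_left, Polynomial.eval_comp]

lemma poch_pos (x : ℝ) (hx : 0 < x) (n : ℕ) : 0 < poch x n := by
  induction n with
  | zero => simp [poch_zero]
  | succ k ih => rw [poch_succ]; positivity

lemma aux_sum (N m : ℝ) (hm : 0 < m) (hNm : m ≤ N) (hN1 : 1 < N)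
    (ε : ℕ) (hε : ε ≤ 1) (t : ℕ) :
    ∑ k ∈ Finset.range (t + 1),
      ((N + 2 * k + ε - 1) / (N + k + ε - 1)) * (poch N (k + ε) / poch m (k + ε)) *
        (poch (N - m) k / (Nat.factorial k : ℝ)) =
    poch N (t + ε) * poch (N - m + 1) t / (poch m (t + ε) * (Nat.factorial t : ℝ)) := by
  induction t with
  | zero =>
    have h1 : N + (ε:ℝ) - 1 ≠ 0 := by
      have : (0:ℝ) ≤ (ε:ℝ) := by positivity
      nlinarith
    simp [Finset.sum_range_one, poch_zero, h1, div_self, mul_div_assoc]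
  | succ t ih =>
    rw [Finset.sum_range_succ, ih]
    have hNt : (0:ℝ) < N + t + ε := by
      have : (0:ℝ) ≤ (t:ℝ) + ε := by positivity
      linarith
    have hmt : (0:ℝ) < m + (t + ε) := by
      have : (0:ℝ) ≤ ((t:ℝ) + ε) := by positivity
      linarith
    have hpm : 0 < poch m (t + ε) := poch_pos m hm _
    have hpm' : 0 < poch m (t + 1 + ε) := poch_pos m hm _
    have hden : N + ↑(t + 1) + ε - 1 ≠ 0 := by push_cast; nlinarith
    have hfac : (Nat.factorial t : ℝ) ≠ 0 := by positivity
    have hfac' : (Nat.factorial (t + 1) : ℝ) ≠ 0 := by positivity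
    have e1 : t + 1 + ε = (t + ε) + 1 := by ring
    have e2 : poch N (t + 1 + ε) = poch N (t + ε) * (N + t + ε) := by
      rw [e1, poch_succ]; push_cast; ring
    have e3 : poch m (t + 1 + ε) = poch m (t + ε) * (m + (t + ε)) := by
      rw [e1, poch_succ]; push_cast; ring
    have e4 : poch (N - m) (t + 1) = (N - m) * poch (N - m + 1) t := poch_succ_left _ _
    have e5 : poch (N - m + 1) (t + 1) = poch (N - m + 1) t * (N - m + 1 + t) :=
      poch_succ _ _
    have e6 : (Nat.factorial (t + 1) : ℝ) = (t + 1) * Nat.factorial t := by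
      rw [Nat.factorial_succ]; push_cast; ring
    rw [e2, e3, e4, e5, e6]
    have hNt' : N + ↑(t+1) + ε - 1 = N + t + ε := by push_cast; ring
    rw [hNt']
    field_simp
    push_cast
    ring
  
theorem stmt_4 (ρ d : ℤ) (hρ : 2 ≤ ρ) (hd : 1 ≤ d) (hρd : 3 ≤ ρ * d)
    (N m : ℝ) (hN : N = (ρ : ℝ) * (d : ℝ) / 2) (hm : m = (d : ℝ) / 2)
    (ε : ℕ) (hε : ε ≤ 1) (s : ℕ) (hs : ε ≤ s) :
    ∑ k ∈ Finset.range (s - ε + 1),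
      ((N + 2 * k + ε - 1) / (N + k + ε - 1)) * (poch N (k + ε) / poch m (k + ε)) *
        (poch (N - m) k / (Nat.factorial k : ℝ)) =
    poch N s * poch (N - m + 1) (s - ε) / (poch m s * (Nat.factorial (s - ε) : ℝ)) := by
  have hd' : (1:ℝ) ≤ (d:ℝ) := by exact_mod_cast hd
  have hρ' : (2:ℝ) ≤ (ρ:ℝ) := by exact_mod_cast hρ
  have hρd' : (3:ℝ) ≤ (ρ:ℝ) * d := by exact_mod_cast hρd
  have hm0 : 0 < m := by rw [hm]; linarith
  have hNm : m ≤ N := by rw [hm, hN]; nlinarith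
  have hN1 : 1 < N := by rw [hN]; linarith
  obtain ⟨t, rfl⟩ : ∃ t, s = t + ε := ⟨s - ε, (Nat.sub_add_cancel hs).symm⟩
  have : t + ε - ε = t := by omega
  rw [this]
  exact aux_sum N m hm0 hNm hN1 ε hε t
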